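/- Endomorphisms of an Archimedean magnitude space commute under composition: if φ and χ are homomorphisms from M to itself, then φ ∘ χ = χ ∘ φ. -/
import Mathlib


/-- A magnitude space: nonempty, associative, commutative `+` with trichotomy. -/
class MagnitudeSpace (M : Type*) extends Add M where
  nonempty : Nonempty M
  add_assoc' : ∀ a b c : M, a + (b + c) = (a + b) + c
  add_comm' : ∀ a b : M, a + b = b + a
  trichotomy : ∀ a b : M,
    ((∃ d, a = b + d) ∧ a ≠ b ∧ ¬ (∃ d, b = a + d)) ∨
    (¬ (∃ d, a = b + d) ∧ a = b ∧ ¬ (∃ d, b = a + d)) ∨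
    (¬ (∃ d, a = b + d) ∧ a ≠ b ∧ (∃ d, b = a + d))

variable {M : Type*}

/-- `a` is less than `b` iff `b = a + d` for some `d`. -/
def mlt [MagnitudeSpace M] (a b : M) : Prop := ∃ d, b = a + d

/-- `a ≤ b` iff `a < b` or `a = b`. -/
def mle [MagnitudeSpace M] (a b : M) : Prop := mlt a b ∨ a = b

/-- `nsm n a` is the `(n+1)`-fold sum of `a`; as `n` ranges over `ℕ` this
gives exactly the positive integral multiples of `a`. -/
def nsm [MagnitudeSpace M] : ℕ → M → M
  | 0, a => a
  | n + 1, a => nsm n a + a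

section Aux
variable [MagnitudeSpace M]

instance : AddCommSemigroup M where
  add_assoc a b c := (MagnitudeSpace.add_assoc' a b c).symm
  add_comm := MagnitudeSpace.add_comm'

lemma mlt_irrefl (a : M) : ¬ mlt a a := by
  rcases MagnitudeSpace.trichotomy a a with ⟨_, h, _⟩ | ⟨h, _, _⟩ | ⟨_, h, _⟩
  · exact absurd rfl h
  · exact h
  · exact absurd rfl h

lemma mlt_trans {a b c : M} (h : mlt a b) (h' : mlt b c) : mlt a c := by
  obtain ⟨d, rfl⟩ := h; obtain ⟨e, rfl⟩ := h'
  exact ⟨d + e, add_assoc a d e⟩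

lemma mlt_asymm {a b : M} (h : mlt a b) (h' : mlt b a) : False :=
  mlt_irrefl a (mlt_trans h h')

lemma mlt_total (a b : M) : mlt a b ∨ a = b ∨ mlt b a := by
  rcases MagnitudeSpace.trichotomy a b with ⟨h, _, _⟩ | ⟨_, h, _⟩ | ⟨_, _, h⟩
  · exact Or.inr (Or.inr h)
  · exact Or.inr (Or.inl h)
  · exact Or.inl h

lemma mlt_add (a c : M) : mlt a (a + c) := ⟨c, rfl⟩

lemma mlt_add_right {a b : M} (c : M) (h : mlt a b) : mlt (a + c) (b + c) := by
  obtain ⟨d, rfl⟩ := h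
  exact ⟨d, by simp [add_assoc, add_comm, add_left_comm]⟩

lemma mlt_add_left {a b : M} (c : M) (h : mlt a b) : mlt (c + a) (c + b) := by
  rw [add_comm c a, add_comm c b]; exact mlt_add_right c h

lemma mlt_add_both {a b c d : M} (h : mlt a b) (h' : mlt c d) :
    mlt (a + c) (b + d) :=
  mlt_trans (mlt_add_right c h) (mlt_add_left b h')

lemma mlt_of_add_right {a b c : M} (h : mlt (a + c) (b + c)) : mlt a b := by
  rcases mlt_total a b with h' | rfl | h'
  · exact h'
  · exact absurd h (mlt_irrefl _)
  · exact absurd h (fun hh => mlt_asymm hh (mlt_add_right c h'))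

lemma hom_mlt {θ : M → M} (hθ : ∀ x y : M, θ (x + y) = θ x + θ y)
    {a b : M} (h : mlt a b) : mlt (θ a) (θ b) := by
  obtain ⟨d, rfl⟩ := h; exact ⟨θ d, hθ a d⟩

lemma hom_mlt_rev {θ : M → M} (hθ : ∀ x y : M, θ (x + y) = θ x + θ y)
    {a b : M} (h : mlt (θ a) (θ b)) : mlt a b := by
  rcases mlt_total a b with h' | rfl | h'
  · exact h'
  · exact absurd h (mlt_irrefl _)
  · exact absurd h (fun hh => mlt_asymm hh (hom_mlt hθ h'))

lemma nsm_add_distrib (n : ℕ) (a b : M) :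
    nsm n (a + b) = nsm n a + nsm n b := by
  induction n with
  | zero => rfl
  | succ n ih => simp [nsm, ih, add_assoc, add_comm, add_left_comm]

lemma nsm_hom {θ : M → M} (hθ : ∀ x y : M, θ (x + y) = θ x + θ y)
    (n : ℕ) (a : M) : θ (nsm n a) = nsm n (θ a) := by
  induction n with
  | zero => rfl
  | succ n ih => simp [nsm, hθ, ih]

lemma nsm_comm (m n : ℕ) (a : M) : nsm m (nsm n a) = nsm n (nsm m a) := by
  induction m with
  | zero => rfl
  | succ m ih => simp [nsm, ih, nsm_add_distrib]

lemma nsm_mlt (n : ℕ) {a b : M} (h : mlt a b) : mlt (nsm n a) (nsm n b) := by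
  induction n with
  | zero => exact h
  | succ n ih => exact mlt_add_both ih h

lemma nsm_mlt_rev (n : ℕ) {a b : M} (h : mlt (nsm n a) (nsm n b)) : mlt a b := by
  rcases mlt_total a b with h' | rfl | h'
  · exact h'
  · exact absurd h (mlt_irrefl _)
  · exact absurd h (fun hh => mlt_asymm hh (nsm_mlt n h'))

lemma nsm_add_index (m n : ℕ) (a : M) :
    nsm (m + n + 1) a = nsm m a + nsm n a := by
  induction n with
  | zero => rfl
  | succ n ih =>
    show nsm (m + n + 1) a + a = _
    rw [ih, add_assoc]
    rfl

lemma nsm_index_mlt (m n : ℕ) (a : M) : mlt (nsm m a) (nsm (m + n + 1) a) := by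
  rw [nsm_add_index]; exact mlt_add _ _

/-- Key density lemma: if `(p+1)•x < (q+1)•c` then there is a positive rational
`(m+1)/(k+1)` with `(p+1)(k+1)•x < (q+1)(m+1)•w` and `(m+1)•w < (k+1)•c`. -/
lemma key (harch : ∀ x y : M, ∃ n : ℕ, mlt y (nsm n x))
    (x w c : M) (p q : ℕ) (h : mlt (nsm p x) (nsm q c)) :
    ∃ m k : ℕ, mlt (nsm p (nsm k x)) (nsm q (nsm m w)) ∧
      mlt (nsm m w) (nsm k c) := by
  classical
  obtain ⟨d, hd⟩ := h
  obtain ⟨k1, hk1⟩ := harch d (nsm q w)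
  obtain ⟨k2, hk2⟩ := harch c w
  set k : ℕ := k1 + k2 + 1 with hk
  have hkd : mlt (nsm q w) (nsm k d) := by
    refine mlt_trans hk1 ?_
    exact nsm_index_mlt k1 k2 d
  have hkc : mlt w (nsm k c) := by
    refine mlt_trans hk2 ?_
    have : mlt (nsm k2 c) (nsm (k2 + k1 + 1) c) := nsm_index_mlt k2 k1 c
    rwa [show k2 + k1 + 1 = k by omega] at this
  have hex : ∃ m : ℕ, mlt (nsm p (nsm k x)) (nsm m (nsm q w)) := by
    obtain ⟨m, hm⟩ := harch (nsm q w) (nsm p (nsm k x))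
    exact ⟨m, hm⟩
  have hs := Nat.find_spec hex
  set m : ℕ := Nat.find hex with hm
  rcases Nat.eq_zero_or_eq_succ_pred m with h0 | hsucc
  · refine ⟨0, k, ?_, ?_⟩
    · rw [h0] at hs
      exact hs
    · exact hkc
  · refine ⟨m, k, ?_, ?_⟩
    · rwa [nsm_comm m q] at hs
    · -- minimality at m - 1
      have hmin : ¬ mlt (nsm p (nsm k x)) (nsm (m - 1) (nsm q w)) :=
        Nat.find_min hex (by omega)
      have hle : mle (nsm (m - 1) (nsm q w)) (nsm p (nsm k x)) := by
        rcases mlt_total (nsm (m - 1) (nsm q w)) (nsm p (nsm k x)) with h' | h' | h'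
        · exact Or.inl h'
        · exact Or.inr h'
        · exact absurd h' hmin
      have hsm : nsm m (nsm q w) = nsm (m - 1) (nsm q w) + nsm q w := by
        conv_lhs => rw [hsucc]
        rfl
      have hstep : mlt (nsm m (nsm q w)) (nsm p (nsm k x) + nsm k d) := by
        rw [hsm]
        rcases hle with h' | h'
        · exact mlt_add_both h' hkd
        · rw [h']; exact mlt_add_left _ hkd
      have hkey : nsm p (nsm k x) + nsm k d = nsm q (nsm k c) := by
        rw [nsm_comm p k, ← nsm_add_distrib, ← hd, nsm_comm q k]
      rw [hkey, nsm_comm m q] at hstep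
      exact nsm_mlt_rev q hstep

/-- Transfer a comparison against `φ (χ x)` to one against `χ (φ x)`. -/
lemma step (harch : ∀ x y : M, ∃ n : ℕ, mlt y (nsm n x))
    (φ χ : M → M) (hφ : ∀ x y : M, φ (x + y) = φ x + φ y)
    (hχ : ∀ x y : M, χ (x + y) = χ x + χ y) (x : M) (p q : ℕ)
    (h : mlt (nsm p x) (nsm q (φ (χ x)))) :
    mlt (nsm p x) (nsm q (χ (φ x))) := by
  obtain ⟨m, k, h1, h2⟩ := key harch x (φ x) (φ (χ x)) p q h
  -- reflect h2 through φ
  have h2' : mlt (nsm m x) (nsm k (χ x)) := by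
    apply hom_mlt_rev hφ
    rwa [nsm_hom hφ, nsm_hom hφ]
  -- apply χ to h1
  have h1' : mlt (nsm p (nsm k (χ x))) (nsm q (nsm m (χ (φ x)))) := by
    have := hom_mlt hχ h1
    rwa [nsm_hom hχ, nsm_hom hχ, nsm_hom hχ, nsm_hom hχ] at this
  have h2'' : mlt (nsm p (nsm m x)) (nsm p (nsm k (χ x))) := nsm_mlt p h2'
  have := mlt_trans h2'' h1'
  rw [nsm_comm p m, nsm_comm q m] at this
  exact nsm_mlt_rev m this

end Aux

theorem stmt_18 [MagnitudeSpace M]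
    (harch : ∀ x y : M, ∃ n : ℕ, mlt y (nsm n x))
    (φ χ : M → M) (hφ : ∀ x y : M, φ (x + y) = φ x + φ y)
    (hχ : ∀ x y : M, χ (x + y) = χ x + χ y) :
    φ ∘ χ = χ ∘ φ := by
  funext x
  show φ (χ x) = χ (φ x)
  rcases mlt_total (φ (χ x)) (χ (φ x)) with h | h | h
  · exfalso
    obtain ⟨m, k, h1, h2⟩ := key harch (φ (χ x)) x (χ (φ x)) 0 0 h
    -- h1 : mlt (nsm k (φ (χ x))) (nsm m x), h2 : mlt (nsm m x) (nsm k (χ (φ x)))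
    have h3 : mlt (nsm m x) (nsm k (φ (χ x))) := step harch χ φ hχ hφ x m k h2
    exact mlt_asymm h1 h3
  · exact h
  · exfalso
    obtain ⟨m, k, h1, h2⟩ := key harch (χ (φ x)) x (φ (χ x)) 0 0 h
    have h3 : mlt (nsm m x) (nsm k (χ (φ x))) := step harch φ χ hφ hχ x m k h2
    exact mlt_asymm h1 h3
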